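/- Let J₀ ⊇ J₁ ⊇ ⋯ ⊇ J_L be non-empty closed intervals with |J_ℓ|/|J_{ℓ−1}| ≤ q̄ < 1 for all ℓ ∈ [1:L], write h_ℓ := |J_ℓ|/2, and let κ, c₀,…,c_L ∈ ℝ satisfy |κ h_{ℓ−1}(c_{ℓ−1}−c_ℓ)| ≤ γ for all ℓ ∈ [1:L], where γ ≥ 0. Fix q ∈ (q̄,1). Then there exists m₀ > 0, depending only on γ, q̄, and q, such that for all m ≥ m₀, with ε_{m,L} := (1 + (1+Λ_m)q^m)^L − 1: (a) ‖(Id − 𝕀_L∘⋯∘𝕀₁)[exp(iκc₀·)π]‖_{∞,J_L} ≤ ε_{m,L}·‖exp(iκc₀·)π‖_{∞,J₀} for all π ∈ Π_m; (b) the operator norm of 𝕀_L∘⋯∘𝕀₀ from C(J₀) to C(J_L) (with the respective maximum norms) is at most Λ_m(1 + ε_{m,L}). -/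

import Mathlib

/-!
One step `𝕀_J` applied to `u = exp(iκc'·)π`, `π ∈ Π_m`, on `J ⊆ J'` is pulled back to `[-1, 1]`:
`u - 𝕀_J u = exp(iκc·) · (G - 𝕀 G) ∘ Φ_J⁻¹` with the entire function
`G = (exp(iκ(c'-c)·) π) ∘ Φ_J`. By Lebesgue's lemma, `‖G - 𝕀 G‖ ≤ (1 + Λ_m) ‖G - p‖` for every
`p ∈ Π_m`. Hermite's formula with the nodal polynomial `T_{m+1}`, which is bounded by `1` on
`[-1, 1]` and by `((2R - 1)^{m+1} - 1)/2` from below on `|z| = R`, gives a `p` with error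
`≲ max_{|z|=R} |G| / (2R - 1)^{m+1}`. Bernstein's growth estimate together with `|J| ≤ q̄ |J'|`
bounds `|G|` on `|z| = R` by `e^{γR} (2q̄R + 3)^m ‖π‖_{J'}`. For `R` large and then `m` large, one
step thus costs at most `(1 + Λ_m) q^m ‖π‖_{J'}`. All iterates keep the form
`exp(iκc_ℓ·) · polynomial`, so the step errors compound to `(1 + (1 + Λ_m) q^m)^L - 1`;
(b) is (a) applied to `𝕀₀ f`.
-/


open Complex Set

/-- Lagrange polynomial `L_ν(z) = ∏_{μ≠ν} (z−ξ_μ)/(ξ_ν−ξ_μ)` for nodes `ξ` on `[−1,1]`. -/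
noncomputable def lagrangeC {m : ℕ} (ξ : Fin (m + 1) → ℝ) (ν : Fin (m + 1)) (z : ℂ) : ℂ :=
  ∏ μ ∈ Finset.univ.erase ν, (z - (ξ μ : ℂ)) / ((ξ ν : ℂ) - (ξ μ : ℂ))

/-- Interpolation operator `𝕀[f] = Σ_ν f(ξ_ν)·L_ν` on `[−1,1]`. -/
noncomputable def interpC {m : ℕ} (ξ : Fin (m + 1) → ℝ) (f : ℝ → ℂ) (x : ℝ) : ℂ :=
  ∑ ν, f (ξ ν) * lagrangeC ξ ν (x : ℂ)

/-- The maximum norm `‖f‖_{∞,s}` of a function on a set. -/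
noncomputable def supNormOn (f : ℝ → ℂ) (s : Set ℝ) : ℝ :=
  sSup ((fun x => ‖f x‖) '' s)

/-- The Lebesgue constant `Λ_m = sup{‖𝕀[f]‖_{∞,[−1,1]}/‖f‖_{∞,[−1,1]} : f ∈ C[−1,1] \ {0}}`. -/
noncomputable def lebesgueConst {m : ℕ} (ξ : Fin (m + 1) → ℝ) : ℝ :=
  sSup {r : ℝ | ∃ f : ℝ → ℂ, ContinuousOn f (Set.Icc (-1) 1) ∧
    (∃ x ∈ Set.Icc (-1 : ℝ) 1, f x ≠ 0) ∧
    r = supNormOn (interpC ξ f) (Set.Icc (-1) 1) / supNormOn f (Set.Icc (-1) 1)}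

/-- The affine map `Φ_{[a,b]}(t) = (b+a)/2 + (b−a)/2·t` taking `[−1,1]` to `[a,b]`. -/
noncomputable def phiAB (a b t : ℝ) : ℝ := (b + a) / 2 + (b - a) / 2 * t

/-- The inverse `Φ_{[a,b]}^{−1}(x) = (2x − a − b)/(b − a)`. -/
noncomputable def phiInvAB (a b x : ℝ) : ℝ := (2 * x - (a + b)) / (b - a)

/-- Transformed interpolation operator `𝕀_{[a,b]}` on the interval `[a,b]`. -/
noncomputable def interpOn {m : ℕ} (ξ : Fin (m + 1) → ℝ) (a b : ℝ) (f : ℝ → ℂ) (x : ℝ) : ℂ :=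
  ∑ ν, f (phiAB a b (ξ ν)) * lagrangeC ξ ν ((phiInvAB a b x : ℝ) : ℂ)

/-- The weighted (directional) interpolation operator
`𝕀_{[a,b],c}[f] = exp(iκc·)·𝕀_{[a,b]}[exp(−iκc·)f]`. -/
noncomputable def wInterp {m : ℕ} (ξ : Fin (m + 1) → ℝ) (a b κ c : ℝ) (f : ℝ → ℂ) (x : ℝ) : ℂ :=
  Complex.exp (Complex.I * (κ : ℂ) * (c : ℂ) * (x : ℂ)) *
    interpOn ξ a b (fun y => Complex.exp (-(Complex.I * (κ : ℂ) * (c : ℂ) * (y : ℂ))) * f y) x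

/-- The iterated weighted interpolation operator `𝕀_ℓ ∘ ⋯ ∘ 𝕀_1` (the identity if `ℓ = 0`),
where `𝕀_j` is the weighted interpolation operator of the interval `J_j = [A j, B j]`
with direction `c j`. -/
noncomputable def iterW {m : ℕ} (ξ : Fin (m + 1) → ℝ) (A B : ℕ → ℝ) (κ : ℝ) (c : ℕ → ℝ) :
    ℕ → (ℝ → ℂ) → (ℝ → ℂ)
  | 0 => fun f => f
  | ℓ + 1 => fun f => wInterp ξ (A (ℓ + 1)) (B (ℓ + 1)) κ (c (ℓ + 1)) (iterW ξ A B κ c ℓ f)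

open Polynomial

lemma supNormOn_nonneg (f : ℝ → ℂ) (s : Set ℝ) : 0 ≤ supNormOn f s :=
  Real.sSup_nonneg (by rintro _ ⟨x, -, rfl⟩; exact norm_nonneg _)

lemma norm_le_supNormOn {f : ℝ → ℂ} {a b x : ℝ} (hf : ContinuousOn f (Icc a b))
    (hx : x ∈ Icc a b) : ‖f x‖ ≤ supNormOn f (Icc a b) :=
  le_csSup (isCompact_Icc.bddAbove_image hf.norm) ⟨x, hx, rfl⟩

lemma supNormOn_le {f : ℝ → ℂ} {s : Set ℝ} {C : ℝ} (hC : 0 ≤ C) (h : ∀ x ∈ s, ‖f x‖ ≤ C) :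
    supNormOn f s ≤ C :=
  Real.sSup_le (by rintro _ ⟨x, hx, rfl⟩; exact h x hx) hC

section Interpolation

variable {m : ℕ} (ξ : Fin (m + 1) → ℝ)

lemma lagrangeC_eq_eval_basis (ν : Fin (m + 1)) (z : ℂ) :
    lagrangeC ξ ν z = (Lagrange.basis Finset.univ (fun μ => (ξ μ : ℂ)) ν).eval z := by
  simp only [lagrangeC, Lagrange.basis, eval_prod, Lagrange.basisDivisor, eval_mul, eval_C,
    eval_sub, eval_X, div_eq_inv_mul]

lemma interpC_eq_eval_interpolate (f : ℝ → ℂ) (x : ℝ) :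
    interpC ξ f x =
      (Lagrange.interpolate Finset.univ (fun μ => (ξ μ : ℂ)) (fun ν => f (ξ ν))).eval (x : ℂ) := by
  simp [interpC, Lagrange.interpolate_apply, eval_finsetSum, lagrangeC_eq_eval_basis]

lemma continuous_interpC (f : ℝ → ℂ) : Continuous (interpC ξ f) := by
  simp_rw [funext (interpC_eq_eval_interpolate ξ f)]
  fun_prop

lemma interpC_sub (f g : ℝ → ℂ) :
    interpC ξ (f - g) = interpC ξ f - interpC ξ g := by
  ext x
  simp [interpC, sub_mul]

variable {ξ} (hinj : Function.Injective ξ)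
include hinj

lemma injOn_ofReal_comp_univ :
    Set.InjOn (fun μ => (ξ μ : ℂ)) (Finset.univ : Finset (Fin (m + 1))) :=
  fun _ _ _ _ h => hinj (Complex.ofReal_injective h)

lemma natDegree_interpolate_le (r : Fin (m + 1) → ℂ) :
    (Lagrange.interpolate Finset.univ (fun μ => (ξ μ : ℂ)) r).natDegree ≤ m := by
  have := Lagrange.degree_interpolate_lt r (injOn_ofReal_comp_univ hinj)
  rw [Finset.card_univ, Fintype.card_fin] at this
  exact natDegree_le_iff_degree_le.mpr (Order.le_of_lt_succ this)

lemma interpC_eval_of_natDegree_le {p : ℂ[X]} (hp : p.natDegree ≤ m) :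
    interpC ξ (fun t => p.eval (t : ℂ)) = fun x : ℝ => p.eval (x : ℂ) := by
  have hlt : p.degree < (Finset.univ : Finset (Fin (m + 1))).card := by
    rw [Finset.card_univ, Fintype.card_fin]
    exact degree_le_natDegree.trans_lt (by exact_mod_cast Nat.lt_succ_of_le hp)
  ext x
  rw [interpC_eq_eval_interpolate, ← Lagrange.eq_interpolate (injOn_ofReal_comp_univ hinj) hlt]

end Interpolation

section LebesgueConstant

variable {m : ℕ} {ξ : Fin (m + 1) → ℝ} (hξ : ∀ ν, ξ ν ∈ Icc (-1 : ℝ) 1)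
include hξ

lemma norm_interpC_le {f : ℝ → ℂ} (hf : ContinuousOn f (Icc (-1) 1)) (x : ℝ) :
    ‖interpC ξ f x‖ ≤ (∑ ν, ‖lagrangeC ξ ν x‖) * supNormOn f (Icc (-1) 1) := by
  rw [Finset.sum_mul]
  refine (norm_sum_le _ _).trans (Finset.sum_le_sum fun ν _ => ?_)
  rw [norm_mul, mul_comm]
  exact mul_le_mul_of_nonneg_left (norm_le_supNormOn hf (hξ ν)) (norm_nonneg _)

lemma bddAbove_lebesgueRatios :
    BddAbove {r : ℝ | ∃ f : ℝ → ℂ, ContinuousOn f (Set.Icc (-1) 1) ∧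
      (∃ x ∈ Set.Icc (-1 : ℝ) 1, f x ≠ 0) ∧
      r = supNormOn (interpC ξ f) (Set.Icc (-1) 1) / supNormOn f (Set.Icc (-1) 1)} := by
  have hcont : Continuous fun x : ℝ => ∑ ν, ‖lagrangeC ξ ν x‖ := by
    simp_rw [lagrangeC_eq_eval_basis]
    fun_prop
  obtain ⟨C, hC⟩ := (isCompact_Icc (a := (-1 : ℝ)) (b := 1)).bddAbove_image hcont.continuousOn
  have hC0 : 0 ≤ C := (Finset.sum_nonneg fun _ _ => norm_nonneg _).trans (hC ⟨0, by simp, rfl⟩)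
  refine ⟨C, ?_⟩
  rintro _ ⟨f, hf, ⟨x, hx, hfx⟩, rfl⟩
  have hpos : 0 < supNormOn f (Icc (-1) 1) :=
    (norm_pos_iff.mpr hfx).trans_le (norm_le_supNormOn hf hx)
  rw [div_le_iff₀ hpos]
  exact supNormOn_le (by positivity) fun y hy =>
    (norm_interpC_le hξ hf y).trans (mul_le_mul_of_nonneg_right (hC ⟨y, hy, rfl⟩) hpos.le)

lemma lebesgueConst_nonneg : 0 ≤ lebesgueConst ξ :=
  le_csSup_of_le (bddAbove_lebesgueRatios hξ)
    ⟨fun _ => 1, continuousOn_const, ⟨0, by simp, one_ne_zero⟩, rfl⟩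
    (div_nonneg (supNormOn_nonneg _ _) (supNormOn_nonneg _ _))

lemma supNormOn_interpC_le {f : ℝ → ℂ} (hf : ContinuousOn f (Icc (-1) 1)) :
    supNormOn (interpC ξ f) (Icc (-1) 1) ≤ lebesgueConst ξ * supNormOn f (Icc (-1) 1) := by
  rcases em (∃ x ∈ Icc (-1 : ℝ) 1, f x ≠ 0) with ⟨x, hx, hfx⟩ | hzero
  · have hpos : 0 < supNormOn f (Icc (-1) 1) :=
      (norm_pos_iff.mpr hfx).trans_le (norm_le_supNormOn hf hx)
    rw [← div_le_iff₀ hpos]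
    exact le_csSup (bddAbove_lebesgueRatios hξ) ⟨f, hf, ⟨x, hx, hfx⟩, rfl⟩
  · have h0 := mul_nonneg (lebesgueConst_nonneg hξ) (supNormOn_nonneg f (Icc (-1) 1))
    have hnodes : ∀ ν, f (ξ ν) = 0 := fun ν => by_contra fun h => hzero ⟨_, hξ ν, h⟩
    exact supNormOn_le h0 fun y _ => by simpa [interpC, hnodes] using h0

lemma norm_sub_interpC_le (hinj : Function.Injective ξ) {G : ℝ → ℂ}
    (hG : ContinuousOn G (Icc (-1) 1)) {p : ℂ[X]} (hp : p.natDegree ≤ m) {E : ℝ}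
    (hE : ∀ t ∈ Icc (-1 : ℝ) 1, ‖G t - p.eval (t : ℂ)‖ ≤ E) {t : ℝ} (ht : t ∈ Icc (-1 : ℝ) 1) :
    ‖G t - interpC ξ G t‖ ≤ (1 + lebesgueConst ξ) * E := by
  set D : ℝ → ℂ := G - fun s : ℝ => p.eval (s : ℂ)
  have hD : ContinuousOn D (Icc (-1) 1) := hG.sub (by fun_prop)
  have hsplit : G t - interpC ξ G t = D t - interpC ξ D t := by
    simp [D, interpC_sub, interpC_eval_of_natDegree_le hinj hp]
  have hID : ‖interpC ξ D t‖ ≤ lebesgueConst ξ * E :=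
    (norm_le_supNormOn (continuous_interpC ξ D).continuousOn ht).trans <|
      (supNormOn_interpC_le hξ hD).trans <| mul_le_mul_of_nonneg_left
        (supNormOn_le ((norm_nonneg _).trans (hE t ht)) hE) (lebesgueConst_nonneg hξ)
  rw [hsplit, add_mul, one_mul]
  exact (norm_sub_le _ _).trans (add_le_add (hE t ht) hID)

end LebesgueConstant

section Joukowski

lemma exists_joukowski_preimage (z : ℂ) : ∃ u : ℂ, u ≠ 0 ∧ ‖u‖ ≤ 1 ∧ (u + u⁻¹) / 2 = z := by
  obtain ⟨s, hs⟩ := IsAlgClosed.exists_pow_nat_eq (z ^ 2 - 1) two_pos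
  have hmul : (z + s) * (z - s) = 1 := by linear_combination -hs
  rcases le_total ‖z + s‖ 1 with h | h
  · exact ⟨z + s, left_ne_zero_of_mul_eq_one hmul, h,
      by rw [inv_eq_of_mul_eq_one_right hmul]; ring⟩
  · refine ⟨z - s, right_ne_zero_of_mul_eq_one hmul, ?_,
      by rw [inv_eq_of_mul_eq_one_left hmul]; ring⟩
    have := congrArg norm hmul
    rw [norm_mul, norm_one] at this
    nlinarith [norm_nonneg (z - s)]

lemma norm_inv_le_of_joukowski {u z : ℂ} (hu : ‖u‖ ≤ 1) (huz : (u + u⁻¹) / 2 = z) :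
    ‖u⁻¹‖ ≤ 2 * ‖z‖ + 1 := by
  have : u⁻¹ = 2 * z - u := by rw [← huz]; ring
  rw [this]
  refine (norm_sub_le _ _).trans ?_
  rw [norm_mul, Complex.norm_two]
  linarith

lemma le_norm_inv_of_joukowski {u z : ℂ} (hu : ‖u‖ ≤ 1) (huz : (u + u⁻¹) / 2 = z) :
    2 * ‖z‖ - 1 ≤ ‖u⁻¹‖ := by
  have : 2 * z = u + u⁻¹ := by rw [← huz]; ring
  have h := norm_add_le u u⁻¹
  rw [← this, norm_mul, Complex.norm_two] at h
  linarith

lemma Polynomial.Chebyshev.eval_T_joukowski (n : ℤ) {u : ℂ} (hu : u ≠ 0) :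
    (T ℂ n).eval ((u + u⁻¹) / 2) = (u ^ n + u⁻¹ ^ n) / 2 := by
  have hcosh : (u + u⁻¹) / 2 = Complex.cosh (Complex.log u) := by
    rw [Complex.cosh, Complex.exp_neg, Complex.exp_log hu]
  rw [hcosh, T_complex_cosh, Complex.cosh, Complex.exp_neg, Complex.exp_int_mul,
    Complex.exp_log hu, inv_zpow]

end Joukowski

namespace Polynomial.Chebyshev

lemma norm_eval_T_le_one (n : ℤ) {x : ℝ} (hx : x ∈ Icc (-1 : ℝ) 1) :
    ‖(T ℂ n).eval (x : ℂ)‖ ≤ 1 := by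
  rw [← complex_ofReal_eval_T, Complex.norm_real, Real.norm_eq_abs]
  exact abs_eval_T_real_le_one n (abs_le.mpr hx)

lemma le_norm_eval_T (n : ℕ) {t : ℂ} (ht : 1 / 2 ≤ ‖t‖) :
    ((2 * ‖t‖ - 1) ^ n - 1) / 2 ≤ ‖(T ℂ n).eval t‖ := by
  obtain ⟨u, hu0, hu1, rfl⟩ := exists_joukowski_preimage t
  have hinv := le_norm_inv_of_joukowski hu1 rfl
  rw [eval_T_joukowski n hu0, zpow_natCast, zpow_natCast]
  have h0 : ‖(u ^ n + u⁻¹ ^ n) / 2‖ = ‖u ^ n + u⁻¹ ^ n‖ / 2 := by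
    rw [norm_div, Complex.norm_two]
  have h1 : (2 * ‖(u + u⁻¹) / 2‖ - 1) ^ n ≤ ‖u⁻¹ ^ n‖ := by
    rw [norm_pow]; exact pow_le_pow_left₀ (by linarith) hinv n
  have h2 : ‖u ^ n‖ ≤ 1 := by rw [norm_pow]; exact pow_le_one₀ (norm_nonneg u) hu1
  have h3 := norm_sub_le (u ^ n + u⁻¹ ^ n) (u ^ n)
  rw [add_sub_cancel_left] at h3
  linarith

end Polynomial.Chebyshev

lemma exists_eval_eq_pow_mul_eval_joukowski {Q : ℂ[X]} {m : ℕ} (hQ : Q.natDegree ≤ m) :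
    ∃ P : ℂ[X], ∀ u : ℂ, u ≠ 0 → P.eval u = u ^ m * Q.eval ((u + u⁻¹) / 2) := by
  refine ⟨∑ k ∈ Finset.range (m + 1), C (Q.coeff k / 2 ^ k) * (X ^ 2 + 1) ^ k * X ^ (m - k),
    fun u hu => ?_⟩
  rw [eval_eq_sum_range' (Nat.lt_succ_of_le hQ), Finset.mul_sum, eval_finsetSum]
  refine Finset.sum_congr rfl fun k hk => ?_
  rw [← pow_sub_mul_pow u (Nat.lt_succ_iff.mp (Finset.mem_range.mp hk))]
  have key : u ^ k * ((u + u⁻¹) / 2) ^ k = (u ^ 2 + 1) ^ k / 2 ^ k := by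
    rw [← mul_pow, ← div_pow]
    congr 1
    field_simp
  simp only [eval_mul, eval_C, eval_pow, eval_add, eval_X, eval_one]
  linear_combination -(u ^ (m - k) * Q.coeff k) * key

/-- Bernstein's growth estimate off `[-1, 1]`. -/
lemma norm_eval_le_of_forall_Icc {Q : ℂ[X]} {m : ℕ} (hQ : Q.natDegree ≤ m) {M : ℝ}
    (hM : ∀ x ∈ Icc (-1 : ℝ) 1, ‖Q.eval (x : ℂ)‖ ≤ M) (z : ℂ) :
    ‖Q.eval z‖ ≤ M * (2 * ‖z‖ + 1) ^ m := by
  obtain ⟨P, hP⟩ := exists_eval_eq_pow_mul_eval_joukowski hQ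
  have hcircle : ∀ v ∈ frontier (Metric.ball (0 : ℂ) 1), ‖P.eval v‖ ≤ M := by
    intro v hv
    rw [frontier_ball 0 one_ne_zero, mem_sphere_zero_iff_norm] at hv
    have hv0 : v ≠ 0 := norm_ne_zero_iff.mp (by rw [hv]; exact one_ne_zero)
    have hre : (v + v⁻¹) / 2 = (v.re : ℂ) := by
      rw [Complex.inv_def, Complex.normSq_eq_norm_sq, hv, one_pow, inv_one, Complex.ofReal_one,
        mul_one, Complex.add_conj]
      push_cast; ring
    rw [hP v hv0, norm_mul, norm_pow, hv, one_pow, one_mul, hre]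
    exact hM _ (abs_le.mp ((Complex.abs_re_le_norm v).trans hv.le))
  obtain ⟨u, hu0, hu1, rfl⟩ := exists_joukowski_preimage z
  have hPu : ‖P.eval u‖ ≤ M :=
    Complex.norm_le_of_forall_mem_frontier_norm_le Metric.isBounded_ball
      P.differentiable.diffContOnCl hcircle
      (by rwa [closure_ball 0 one_ne_zero, mem_closedBall_zero_iff])
  have hQ_eq : Q.eval ((u + u⁻¹) / 2) = P.eval u * u⁻¹ ^ m := by
    rw [hP u hu0, mul_comm, ← mul_assoc, ← mul_pow, inv_mul_cancel₀ hu0, one_pow, one_mul]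
  rw [hQ_eq, norm_mul, norm_pow]
  exact mul_le_mul hPu (pow_le_pow_left₀ (norm_nonneg _) (norm_inv_le_of_joukowski hu1 rfl) m)
    (by positivity) ((norm_nonneg _).trans hPu)

namespace Polynomial

variable {R : Type*} [CommRing R]

lemma coeff_divX_iterate (p : R[X]) (k n : ℕ) : (divX^[k] p).coeff n = p.coeff (n + k) := by
  induction k generalizing n with
  | zero => rfl
  | succ k ih =>
    rw [Function.iterate_succ_apply', coeff_divX, ih]
    congr 1
    omega

lemma sub_mul_sum_divX_iterate (p : R[X]) (t x : R) (N : ℕ) :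
    (t - x) * ∑ j ∈ Finset.range N, (divX^[j + 1] p).eval t * x ^ j =
      p.eval t - (divX^[N] p).eval t * x ^ N - ∑ j ∈ Finset.range N, p.coeff j * x ^ j := by
  induction N with
  | zero => simp
  | succ N ih =>
    have hstep := congrArg (eval t) (divX_mul_X_add (divX^[N] p))
    rw [eval_add, eval_mul, eval_X, eval_C, coeff_divX_iterate, zero_add] at hstep
    rw [Finset.sum_range_succ, Finset.sum_range_succ, mul_add, ih, Function.iterate_succ_apply']
    linear_combination x ^ N * hstep

lemma sub_mul_sum_divX_iterate_of_natDegree_le {p : R[X]} {m : ℕ} (hp : p.natDegree ≤ m + 1)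
    (t x : R) :
    (t - x) * ∑ j ∈ Finset.range (m + 1), (divX^[j + 1] p).eval t * x ^ j =
      p.eval t - p.eval x := by
  have htop : divX^[m + 1] p = C (p.coeff (m + 1)) := by
    ext n
    rw [coeff_divX_iterate, coeff_C]
    rcases n with _ | n
    · simp
    · exact coeff_eq_zero_of_natDegree_lt (by omega)
  rw [sub_mul_sum_divX_iterate, htop, eval_C, eval_eq_sum_range' (Nat.lt_succ_of_le hp) x,
    Finset.sum_range_succ _ (m + 1)]
  ring

end Polynomial

section Hermite

open Metric

variable {g : ℂ → ℂ} {ω : ℂ[X]} {R : ℝ} {m : ℕ}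

/-- Hermite's interpolant of `g` at the zeros of `ω`, as a Cauchy integral over `|t| = R`
against the divided differences `(ω(t) - ω(x)) / (t - x) = ∑ⱼ (divX^[j+1] ω)(t) xʲ`. -/
noncomputable def hermiteApprox (g : ℂ → ℂ) (ω : ℂ[X]) (R : ℝ) (m : ℕ) : ℂ[X] :=
  ∑ j ∈ Finset.range (m + 1), C ((2 * Real.pi * I)⁻¹ •
    ∮ t in C(0, R), g t / ω.eval t * (divX^[j + 1] ω).eval t) * X ^ j

lemma natDegree_hermiteApprox_le : (hermiteApprox g ω R m).natDegree ≤ m :=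
  natDegree_sum_le_of_forall_le _ _ fun _ hj =>
    (natDegree_C_mul_X_pow_le _ _).trans (Nat.lt_succ_iff.mp (Finset.mem_range.mp hj))

lemma eval_hermiteApprox (hR : 0 ≤ R) (hg : ContinuousOn g (sphere 0 R))
    (hω : ∀ t ∈ sphere (0 : ℂ) R, ω.eval t ≠ 0) (x : ℂ) :
    (hermiteApprox g ω R m).eval x = (2 * Real.pi * I : ℂ)⁻¹ • ∮ t in C(0, R),
      g t / ω.eval t * ∑ j ∈ Finset.range (m + 1), (divX^[j + 1] ω).eval t * x ^ j := by
  have hint : (∮ t in C(0, R),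
      g t / ω.eval t * ∑ j ∈ Finset.range (m + 1), (divX^[j + 1] ω).eval t * x ^ j) =
      ∑ j ∈ Finset.range (m + 1),
        x ^ j • ∮ t in C(0, R), g t / ω.eval t * (divX^[j + 1] ω).eval t := by
    simp_rw [← circleIntegral.integral_smul]
    rw [← circleIntegral.integral_fun_sum
      (f := fun j t => x ^ j • (g t / ω.eval t * (divX^[j + 1] ω).eval t)) fun j _ =>
        ContinuousOn.circleIntegrable hR (((hg.div (by fun_prop) hω).mul
          (divX^[j + 1] ω).continuous.continuousOn).const_smul (x ^ j))]
    simp_rw [Finset.mul_sum, smul_eq_mul]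
    congr 1; funext t; exact Finset.sum_congr rfl fun _ _ => by ring
  rw [hint, hermiteApprox, eval_finsetSum, Finset.smul_sum]
  simp only [eval_mul, eval_C, eval_pow, eval_X, smul_eq_mul]
  exact Finset.sum_congr rfl fun j _ => by ring

lemma sub_eval_hermiteApprox (hg : Differentiable ℂ g) (hωm : ω.natDegree ≤ m + 1)
    (hω : ∀ t ∈ sphere (0 : ℂ) R, ω.eval t ≠ 0) {x : ℂ} (hx : ‖x‖ < R) :
    g x - (hermiteApprox g ω R m).eval x =
      (2 * Real.pi * I : ℂ)⁻¹ • ∮ t in C(0, R), ω.eval x / ((t - x) * ω.eval t) * g t := by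
  have hR : 0 ≤ R := (norm_nonneg x).trans hx.le
  have htx : ∀ t ∈ sphere (0 : ℂ) R, t - x ≠ 0 := fun t ht h => by
    rw [sub_eq_zero.mp h, mem_sphere_zero_iff_norm] at ht
    exact hx.ne ht
  rw [eval_hermiteApprox hR hg.continuous.continuousOn hω,
    ← hg.diffContOnCl.two_pi_i_inv_smul_circleIntegral_sub_inv_smul (mem_ball_zero_iff.mpr hx),
    ← smul_sub, ← circleIntegral.integral_sub (f := fun t => (t - x)⁻¹ • g t)
      (g := fun t => g t / ω.eval t *
        ∑ j ∈ Finset.range (m + 1), (divX^[j + 1] ω).eval t * x ^ j)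
      (ContinuousOn.circleIntegrable hR ((continuousOn_id.sub continuousOn_const).inv₀ htx
        |>.smul hg.continuous.continuousOn))
      (ContinuousOn.circleIntegrable hR ((hg.continuous.continuousOn.div (by fun_prop) hω).mul
        (by fun_prop)))]
  congr 1
  refine circleIntegral.integral_congr hR fun t ht => ?_
  have hK := eq_div_of_mul_eq (htx t ht)
    ((mul_comm _ _).trans (sub_mul_sum_divX_iterate_of_natDegree_le hωm t x))
  simp only [hK, smul_eq_mul]
  field_simp [htx t ht, hω t ht]
  ring

lemma norm_sub_eval_hermiteApprox_le (hg : Differentiable ℂ g) (hωm : ω.natDegree ≤ m + 1)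
    (hR : 1 < R) {Mg ε : ℝ} (hε : 0 < ε) (hg_le : ∀ t ∈ sphere (0 : ℂ) R, ‖g t‖ ≤ Mg)
    (hω_ge : ∀ t ∈ sphere (0 : ℂ) R, ε ≤ ‖ω.eval t‖) {x : ℂ} (hx : ‖x‖ ≤ 1) :
    ‖g x - (hermiteApprox g ω R m).eval x‖ ≤ R / (R - 1) * Mg * (‖ω.eval x‖ / ε) := by
  have hω : ∀ t ∈ sphere (0 : ℂ) R, ω.eval t ≠ 0 := fun t ht h =>
    hε.not_ge (by simpa [h] using hω_ge t ht)
  rw [sub_eval_hermiteApprox hg hωm hω (hx.trans_lt hR)]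
  refine (circleIntegral.norm_two_pi_i_inv_smul_integral_le_of_norm_le_const (by linarith)
    (C := ‖ω.eval x‖ / ((R - 1) * ε) * Mg) fun t ht => ?_).trans (le_of_eq (by field_simp))
  have htx : R - 1 ≤ ‖t - x‖ := by
    have := norm_sub_norm_le t x
    rw [mem_sphere_zero_iff_norm.mp ht] at this
    linarith
  rw [norm_mul, norm_div, norm_mul]
  gcongr
  · exact hω_ge t ht
  · exact hg_le t ht

lemma exists_natDegree_le_norm_sub_eval_le_on_Icc {g : ℂ → ℂ} (hg : Differentiable ℂ g)
    (m : ℕ) {R Mg : ℝ} (hR : 1 < R) (hg_le : ∀ t ∈ sphere (0 : ℂ) R, ‖g t‖ ≤ Mg) :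
    ∃ p : ℂ[X], p.natDegree ≤ m ∧ ∀ x ∈ Icc (-1 : ℝ) 1,
      ‖g x - p.eval (x : ℂ)‖ ≤ R / (R - 1) * Mg * (2 / ((2 * R - 1) ^ (m + 1) - 1)) := by
  set ε := ((2 * R - 1) ^ (m + 1) - 1) / 2
  have hε : 0 < ε := by
    have : 1 < (2 * R - 1) ^ (m + 1) := one_lt_pow₀ (by linarith) m.succ_ne_zero
    simp only [ε]; linarith
  have hT_ge : ∀ t ∈ sphere (0 : ℂ) R, ε ≤ ‖(Chebyshev.T ℂ (m + 1 : ℕ)).eval t‖ := fun t ht => by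
    have := Chebyshev.le_norm_eval_T (m + 1) (t := t)
      (by rw [mem_sphere_zero_iff_norm.mp ht]; linarith)
    rwa [mem_sphere_zero_iff_norm.mp ht] at this
  refine ⟨hermiteApprox g (Chebyshev.T ℂ (m + 1 : ℕ)) R m, natDegree_hermiteApprox_le,
    fun x hx => ?_⟩
  have hx1 : ‖(x : ℂ)‖ ≤ 1 := by rw [Complex.norm_real, Real.norm_eq_abs]; exact abs_le.mpr hx
  refine (norm_sub_eval_hermiteApprox_le hg
    (by rw [Chebyshev.natDegree_T, Int.natAbs_natCast]) hR hε hg_le hT_ge hx1).trans ?_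
  have : 2 / ((2 * R - 1) ^ (m + 1) - 1) = 1 / ε := by simp only [ε]; field_simp
  rw [this]
  have hMg : 0 ≤ Mg :=
    (norm_nonneg _).trans (hg_le R (by simp [abs_of_pos (by linarith : 0 < R)]))
  gcongr
  exact Chebyshev.norm_eval_T_le_one _ hx

end Hermite

lemma exists_mul_pow_le_pow {ρ q : ℝ} (hρ : 0 ≤ ρ) (hρq : ρ < q) (C : ℝ) :
    ∃ n : ℕ, ∀ m, n ≤ m → C * ρ ^ m ≤ q ^ m := by
  have hq : 0 < q := hρ.trans_lt hρq
  have hρq' : ρ / q < 1 := (div_lt_one hq).mpr hρq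
  have hC : 0 < |C| + 1 := by positivity
  obtain ⟨n, hn⟩ := exists_pow_lt_of_lt_one (inv_pos.mpr hC) hρq'
  refine ⟨n, fun m hm => ?_⟩
  have hsmall : (|C| + 1) * (ρ / q) ^ m ≤ 1 :=
    calc (|C| + 1) * (ρ / q) ^ m ≤ (|C| + 1) * (|C| + 1)⁻¹ := by
          gcongr
          exact (pow_le_pow_of_le_one (div_nonneg hρ hq.le) hρq'.le hm).trans hn.le
      _ = 1 := mul_inv_cancel₀ hC.ne'
  calc C * ρ ^ m ≤ (|C| + 1) * ρ ^ m := by gcongr; linarith [le_abs_self C]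
    _ = (|C| + 1) * (ρ / q) ^ m * q ^ m := by
        rw [mul_assoc, ← mul_pow, div_mul_cancel₀ _ hq.ne']
    _ ≤ q ^ m := by simpa using mul_le_mul_of_nonneg_right hsmall (pow_nonneg hq.le m)

lemma exists_radius_rate_le_pow {qbar q : ℝ} (hqbar : 0 ≤ qbar) (hq : qbar < q) (γ : ℝ) :
    ∃ R : ℝ, 1 < R ∧ ∃ m₀ : ℕ, 0 < m₀ ∧ ∀ m, m₀ ≤ m →
      R / (R - 1) * Real.exp (γ * R) * (2 * qbar * R + 3) ^ m *
        (2 / ((2 * R - 1) ^ (m + 1) - 1)) ≤ q ^ m := by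
  set R := 2 + (q + 3) / (2 * (q - qbar))
  have hR : 2 ≤ R := le_add_of_nonneg_right (div_nonneg (by linarith) (by linarith))
  -- `R` is large enough for `(2 q̄ R + 3) / (2 R - 1) < q`
  set ρ := (2 * qbar * R + 3) / (2 * R - 1)
  have hρq : ρ < q := by
    rw [div_lt_iff₀ (by linarith)]
    have : (q + 3) / (2 * (q - qbar)) * (2 * (q - qbar)) = q + 3 :=
      div_mul_cancel₀ _ (by linarith)
    nlinarith
  obtain ⟨n, hn⟩ := exists_mul_pow_le_pow (div_nonneg (by positivity) (by linarith)) hρq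
    (R / (R - 1) * Real.exp (γ * R) * (4 / (2 * R - 1)))
  refine ⟨R, by linarith, n + 1, n.succ_pos, fun m hm => (le_trans ?_ (hn m (by omega)))⟩
  have hX : 2 ≤ (2 * R - 1) ^ (m + 1) :=
    (by linarith : (2 : ℝ) ≤ 2 * R - 1).trans (le_self_pow₀ (by linarith) m.succ_ne_zero)
  have htail : 2 / ((2 * R - 1) ^ (m + 1) - 1) ≤ 4 / (2 * R - 1) ^ (m + 1) := by
    rw [div_le_div_iff₀ (by linarith) (by linarith)]
    linarith
  calc R / (R - 1) * Real.exp (γ * R) * (2 * qbar * R + 3) ^ m *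
        (2 / ((2 * R - 1) ^ (m + 1) - 1))
      ≤ R / (R - 1) * Real.exp (γ * R) * (2 * qbar * R + 3) ^ m *
        (4 / (2 * R - 1) ^ (m + 1)) := by
        gcongr
        have : 0 < R - 1 := by linarith
        positivity
    _ = R / (R - 1) * Real.exp (γ * R) * (4 / (2 * R - 1)) * ρ ^ m := by
        rw [div_pow, pow_succ]
        field_simp

section AffineMaps

variable {a b : ℝ}

lemma phiAB_mem (hab : a ≤ b) {t : ℝ} (ht : t ∈ Icc (-1 : ℝ) 1) : phiAB a b t ∈ Icc a b := by
  obtain ⟨h1, h2⟩ := ht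
  constructor <;> simp only [phiAB] <;> nlinarith

lemma phiInvAB_mem (hab : a < b) {x : ℝ} (hx : x ∈ Icc a b) : phiInvAB a b x ∈ Icc (-1 : ℝ) 1 := by
  have hba : 0 < b - a := by linarith
  constructor <;> simp only [phiInvAB]
  · rw [le_div_iff₀ hba]; linarith [hx.1]
  · rw [div_le_iff₀ hba]; linarith [hx.2]

lemma phiAB_phiInvAB (hab : a < b) (x : ℝ) : phiAB a b (phiInvAB a b x) = x := by
  have hba : b - a ≠ 0 := by linarith
  simp only [phiAB, phiInvAB]
  field_simp
  ring

lemma natDegree_comp_linear_le {Q : ℂ[X]} {m : ℕ} (hQ : Q.natDegree ≤ m) (α β : ℂ) :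
    (Q.comp (C β * X + C α)).natDegree ≤ m :=
  natDegree_comp_le.trans (by nlinarith [natDegree_linear_le (a := β) (b := α)])

lemma norm_eval_le_of_forall_Icc_of_lt {Q : ℂ[X]} {m : ℕ} (hQ : Q.natDegree ≤ m) {M : ℝ}
    (hab : a < b) (hM : ∀ x ∈ Icc a b, ‖Q.eval (x : ℂ)‖ ≤ M) (z : ℂ) :
    ‖Q.eval z‖ ≤ M * (2 * ‖(2 * z - (a + b)) / (b - a)‖ + 1) ^ m := by
  have hba : (b - a : ℂ) ≠ 0 := by exact_mod_cast (sub_pos.mpr hab).ne'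
  set P := Q.comp (C (((b - a) / 2 : ℝ) : ℂ) * X + C (((b + a) / 2 : ℝ) : ℂ))
  have hP : ∀ w, P.eval w = Q.eval (((b + a) / 2 : ℝ) + ((b - a) / 2 : ℝ) * w) := fun w => by
    simp [P, add_comm]
  have hPbound : ∀ s ∈ Icc (-1 : ℝ) 1, ‖P.eval (s : ℂ)‖ ≤ M := fun s hs => by
    rw [hP]
    exact_mod_cast hM _ (phiAB_mem hab.le hs)
  have := norm_eval_le_of_forall_Icc (natDegree_comp_linear_le hQ _ _) hPbound
    ((2 * z - (a + b)) / (b - a))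
  rwa [hP, show (((b + a) / 2 : ℝ) : ℂ) + ((b - a) / 2 : ℝ) * ((2 * z - (a + b)) / (b - a)) = z by
    push_cast; field_simp; ring] at this

end AffineMaps

section WeightedInterpolation

noncomputable def planeWave (κ c x : ℝ) : ℂ := Complex.exp (Complex.I * κ * c * x)

lemma norm_planeWave (κ c x : ℝ) : ‖planeWave κ c x‖ = 1 := by
  rw [planeWave, show Complex.I * κ * c * x = ((κ * c * x : ℝ) : ℂ) * Complex.I by push_cast; ring]
  exact Complex.norm_exp_ofReal_mul_I _

lemma planeWave_ne_zero (κ c x : ℝ) : planeWave κ c x ≠ 0 := Complex.exp_ne_zero _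

lemma continuous_planeWave (κ c : ℝ) : Continuous (planeWave κ c) := by
  unfold planeWave; fun_prop

variable {m : ℕ} {ξ : Fin (m + 1) → ℝ} {a b κ c : ℝ}

lemma wInterp_apply (f : ℝ → ℂ) (x : ℝ) :
    wInterp ξ a b κ c f x = planeWave κ c x *
      interpC ξ (fun t => (planeWave κ c (phiAB a b t))⁻¹ * f (phiAB a b t)) (phiInvAB a b x) := by
  simp only [wInterp, interpOn, interpC, planeWave, Complex.exp_neg]

lemma exists_wInterp_eq (hinj : Function.Injective ξ) (hab : a < b) (f : ℝ → ℂ) :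
    ∃ p : ℂ[X], p.natDegree ≤ m ∧
      ∀ x, wInterp ξ a b κ c f x = planeWave κ c x * p.eval (x : ℂ) := by
  have hba : (b - a : ℂ) ≠ 0 := by exact_mod_cast (sub_pos.mpr hab).ne'
  set P := Lagrange.interpolate Finset.univ (fun μ => (ξ μ : ℂ))
    (fun ν => (planeWave κ c (phiAB a b (ξ ν)))⁻¹ * f (phiAB a b (ξ ν)))
  refine ⟨P.comp (C (2 / (b - a) : ℂ) * X + C (-(a + b) / (b - a) : ℂ)),
    natDegree_comp_linear_le (natDegree_interpolate_le hinj _) _ _, fun x => ?_⟩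
  rw [wInterp_apply, interpC_eq_eval_interpolate, eval_comp]
  congr 2
  simp only [phiInvAB, eval_add, eval_mul, eval_C, eval_X]
  push_cast
  field_simp
  ring

lemma supNormOn_wInterp_le (hξ : ∀ ν, ξ ν ∈ Icc (-1 : ℝ) 1) (hab : a < b) {f : ℝ → ℂ}
    (hf : ContinuousOn f (Icc a b)) :
    supNormOn (wInterp ξ a b κ c f) (Icc a b) ≤ lebesgueConst ξ * supNormOn f (Icc a b) := by
  set W : ℝ → ℂ := fun t => (planeWave κ c (phiAB a b t))⁻¹ * f (phiAB a b t)
  have hΦ : Continuous (phiAB a b) := by unfold phiAB; fun_prop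
  have hW : ContinuousOn W (Icc (-1) 1) :=
    ((continuous_planeWave κ c).comp hΦ).continuousOn.inv₀ (fun _ _ => planeWave_ne_zero _ _ _)
      |>.mul (hf.comp hΦ.continuousOn fun t ht => phiAB_mem hab.le ht)
  have hWf : supNormOn W (Icc (-1) 1) ≤ supNormOn f (Icc a b) :=
    supNormOn_le (supNormOn_nonneg _ _) fun t ht => by
      simp only [W, norm_mul, norm_inv, norm_planeWave, inv_one, one_mul]
      exact norm_le_supNormOn hf (phiAB_mem hab.le ht)
  refine supNormOn_le (mul_nonneg (lebesgueConst_nonneg hξ) (supNormOn_nonneg _ _))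
    fun x hx => ?_
  rw [wInterp_apply, norm_mul, norm_planeWave, one_mul]
  exact (norm_le_supNormOn (continuous_interpC ξ W).continuousOn (phiInvAB_mem hab hx)).trans <|
    (supNormOn_interpC_le hξ hW).trans (mul_le_mul_of_nonneg_left hWf (lebesgueConst_nonneg hξ))

end WeightedInterpolation

section Reinterpolation

lemma planeWave_eq_mul_exp (κ c' c y : ℝ) :
    planeWave κ c' y =
      planeWave κ c y * Complex.exp (Complex.I * ((κ * (c' - c) : ℝ) : ℂ) * y) := by
  rw [planeWave, planeWave, ← Complex.exp_add]
  push_cast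
  ring_nf

lemma norm_exp_I_mul_affine_le {s α h γ : ℝ} (hsh : |s * h| ≤ γ) (z : ℂ) :
    ‖Complex.exp (Complex.I * s * (α + h * z))‖ ≤ Real.exp (γ * ‖z‖) := by
  rw [Complex.norm_exp, Real.exp_le_exp]
  have hre : (Complex.I * s * (α + h * z)).re = -(s * h * z.im) := by
    simp [Complex.mul_re, Complex.mul_im]
    ring
  rw [hre]
  calc -(s * h * z.im) ≤ |s * h| * |z.im| := by
        rw [← abs_mul]; exact neg_le_abs _
    _ ≤ γ * ‖z‖ :=
        mul_le_mul hsh (Complex.abs_im_le_norm z) (abs_nonneg _) ((abs_nonneg _).trans hsh)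

variable {m : ℕ} {ξ : Fin (m + 1) → ℝ} {a b a' b' : ℝ}

lemma planeWave_mul_sub_wInterp (hab : a < b) (κ c : ℝ) (v : ℝ → ℂ) (x : ℝ) :
    planeWave κ c x * v x - wInterp ξ a b κ c (fun y => planeWave κ c y * v y) x =
      planeWave κ c x * (v (phiAB a b (phiInvAB a b x)) -
        interpC ξ (fun s => v (phiAB a b s)) (phiInvAB a b x)) := by
  simp only [wInterp_apply, phiAB_phiInvAB hab, inv_mul_cancel_left₀ (planeWave_ne_zero _ _ _),
    mul_sub]

lemma norm_eval_comp_affine_le {π : ℂ[X]} (hπ : π.natDegree ≤ m) (hab : a < b)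
    (hsub : Icc a b ⊆ Icc a' b') {qbar : ℝ} (hratio : (b - a) / (b' - a') ≤ qbar) (z : ℂ) :
    ‖π.eval (((b + a) / 2 : ℝ) + ((b - a) / 2 : ℝ) * z)‖ ≤
      supNormOn (fun y : ℝ => π.eval (y : ℂ)) (Icc a' b') * (2 * qbar * ‖z‖ + 3) ^ m := by
  obtain ⟨ha', hb'⟩ := (Icc_subset_Icc_iff hab.le).mp hsub
  have hab' : a' < b' := by linarith
  set σ := (b - a) / (b' - a')
  have hσ0 : 0 < σ := div_pos (by linarith) (by linarith)
  refine (norm_eval_le_of_forall_Icc_of_lt hπ hab' (fun y hy =>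
    norm_le_supNormOn (f := fun y : ℝ => π.eval (y : ℂ)) (by fun_prop) hy) _).trans ?_
  have harg : (2 * ((((b + a) / 2 : ℝ) : ℂ) + ((b - a) / 2 : ℝ) * z) - (a' + b')) / (b' - a') =
      (((b + a - (a' + b')) / (b' - a') : ℝ) : ℂ) + (σ : ℂ) * z := by
    have : (b' - a' : ℂ) ≠ 0 := by exact_mod_cast (sub_pos.mpr hab').ne'
    simp only [σ]; push_cast; field_simp; ring
  have hshift : |(b + a - (a' + b')) / (b' - a')| ≤ 1 := by
    rw [abs_div, abs_of_pos (by linarith : 0 < b' - a'), div_le_one (by linarith), abs_le]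
    constructor <;> linarith
  have hnorm : ‖(2 * ((((b + a) / 2 : ℝ) : ℂ) + ((b - a) / 2 : ℝ) * z) - (a' + b')) / (b' - a')‖
      ≤ qbar * ‖z‖ + 1 := by
    rw [harg]
    refine (norm_add_le _ _).trans ?_
    rw [norm_mul, Complex.norm_real, Complex.norm_real, Real.norm_eq_abs, Real.norm_eq_abs,
      abs_of_pos hσ0]
    nlinarith [norm_nonneg z]
  exact mul_le_mul_of_nonneg_left (pow_le_pow_left₀ (by positivity) (by linarith) m)
    (supNormOn_nonneg _ _)

lemma norm_sub_wInterp_le (hξ : ∀ ν, ξ ν ∈ Icc (-1 : ℝ) 1) (hinj : Function.Injective ξ)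
    (hab : a < b) (hsub : Icc a b ⊆ Icc a' b') {qbar : ℝ}
    (hratio : (b - a) / (b' - a') ≤ qbar) {κ c' c γ : ℝ}
    (hγ : |κ * ((b' - a') / 2) * (c' - c)| ≤ γ) {R : ℝ} (hR : 1 < R) {π : ℂ[X]}
    (hπ : π.natDegree ≤ m) {x : ℝ} (hx : x ∈ Icc a b) :
    ‖planeWave κ c' x * π.eval (x : ℂ) -
        wInterp ξ a b κ c (fun y => planeWave κ c' y * π.eval (y : ℂ)) x‖ ≤
      (1 + lebesgueConst ξ) * (R / (R - 1) * Real.exp (γ * R) * (2 * qbar * R + 3) ^ m *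
        (2 / ((2 * R - 1) ^ (m + 1) - 1))) *
        supNormOn (fun y : ℝ => π.eval (y : ℂ)) (Icc a' b') := by
  obtain ⟨ha', hb'⟩ := (Icc_subset_Icc_iff hab.le).mp hsub
  -- the interpolated function is `planeWave κ c · v`, and `G` is `v` pulled back to `[-1, 1]`
  set s : ℝ := κ * (c' - c)
  set v : ℝ → ℂ := fun y => Complex.exp (Complex.I * s * y) * π.eval (y : ℂ)
  set G : ℂ → ℂ := fun z =>
    Complex.exp (Complex.I * s * (((b + a) / 2 : ℝ) + ((b - a) / 2 : ℝ) * z)) *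
      π.eval (((b + a) / 2 : ℝ) + ((b - a) / 2 : ℝ) * z)
  have hGv : ∀ t : ℝ, G t = v (phiAB a b t) := fun t => by simp only [G, v, phiAB]; push_cast; rfl
  have hexp : |s * ((b - a) / 2)| ≤ γ := by
    have hσ : 0 ≤ (b - a) / (b' - a') ∧ (b - a) / (b' - a') ≤ 1 :=
      ⟨div_nonneg (by linarith) (by linarith), (div_le_one (by linarith)).mpr (by linarith)⟩
    have : s * ((b - a) / 2) = κ * ((b' - a') / 2) * (c' - c) * ((b - a) / (b' - a')) := by
      have : b' - a' ≠ 0 := by linarith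
      simp only [s]; field_simp
    rw [this, abs_mul, abs_of_nonneg hσ.1]
    nlinarith [abs_nonneg (κ * ((b' - a') / 2) * (c' - c))]
  have hGsphere : ∀ z ∈ Metric.sphere (0 : ℂ) R, ‖G z‖ ≤ Real.exp (γ * R) *
      (supNormOn (fun y : ℝ => π.eval (y : ℂ)) (Icc a' b') * (2 * qbar * R + 3) ^ m) := by
    intro z hz
    rw [mem_sphere_zero_iff_norm] at hz
    rw [norm_mul, ← hz]
    exact mul_le_mul (norm_exp_I_mul_affine_le hexp z)
      (norm_eval_comp_affine_le hπ hab hsub hratio z) (norm_nonneg _) (Real.exp_pos _).le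
  obtain ⟨p, hp, hGp⟩ := exists_natDegree_le_norm_sub_eval_le_on_Icc (by fun_prop) m hR hGsphere
  have hu : ∀ y : ℝ, planeWave κ c' y * π.eval (y : ℂ) = planeWave κ c y * v y := fun y => by
    rw [planeWave_eq_mul_exp κ c' c y, mul_assoc]
  simp only [hu]
  rw [planeWave_mul_sub_wInterp hab, ← hGv, funext fun t => (hGv t).symm, norm_mul,
    norm_planeWave, one_mul]
  refine (norm_sub_interpC_le hξ hinj (by fun_prop) hp hGp (phiInvAB_mem hab hx)).trans
    (le_of_eq ?_)
  ring

end Reinterpolation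

section Iteration

variable {L : ℕ} {A B : ℕ → ℝ}

lemma Icc_subset_Icc_zero
    (hnest : ∀ ℓ, 1 ≤ ℓ → ℓ ≤ L → Icc (A ℓ) (B ℓ) ⊆ Icc (A (ℓ - 1)) (B (ℓ - 1))) :
    ∀ ℓ ≤ L, Icc (A ℓ) (B ℓ) ⊆ Icc (A 0) (B 0)
  | 0, _ => subset_rfl
  | ℓ + 1, hℓ => by
    have h := hnest (ℓ + 1) (by omega) hℓ
    rw [add_tsub_cancel_right] at h
    exact h.trans (Icc_subset_Icc_zero hnest ℓ (by omega))

variable {m : ℕ} {ξ : Fin (m + 1) → ℝ} {κ : ℝ} {c : ℕ → ℝ} {δ : ℝ}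
  (hinj : Function.Injective ξ) (hab : ∀ ℓ ≤ L, A ℓ < B ℓ)
  (hnest : ∀ ℓ, 1 ≤ ℓ → ℓ ≤ L → Icc (A ℓ) (B ℓ) ⊆ Icc (A (ℓ - 1)) (B (ℓ - 1)))
  (hδ : 0 ≤ δ)
  (hstep : ∀ i < L, ∀ p : ℂ[X], p.natDegree ≤ m → ∀ x ∈ Icc (A (i + 1)) (B (i + 1)),
    ‖planeWave κ (c i) x * p.eval (x : ℂ) - wInterp ξ (A (i + 1)) (B (i + 1)) κ (c (i + 1))
        (fun y => planeWave κ (c i) y * p.eval (y : ℂ)) x‖ ≤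
      δ * supNormOn (fun y : ℝ => p.eval (y : ℂ)) (Icc (A i) (B i)))
include hinj hab hnest hδ hstep

lemma norm_sub_iterW_le {π : ℂ[X]} (hπ : π.natDegree ≤ m) :
    ∀ ℓ ≤ L, ∀ x ∈ Icc (A ℓ) (B ℓ),
      ‖planeWave κ (c 0) x * π.eval (x : ℂ) -
          iterW ξ A B κ c ℓ (fun y => planeWave κ (c 0) y * π.eval (y : ℂ)) x‖ ≤
        ((1 + δ) ^ ℓ - 1) *
          supNormOn (fun y => planeWave κ (c 0) y * π.eval (y : ℂ)) (Icc (A 0) (B 0)) := by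
  set u₀ : ℝ → ℂ := fun y => planeWave κ (c 0) y * π.eval (y : ℂ)
  set M₀ := supNormOn u₀ (Icc (A 0) (B 0))
  have hu₀ : ContinuousOn u₀ (Icc (A 0) (B 0)) :=
    ((continuous_planeWave κ (c 0)).mul (by fun_prop)).continuousOn
  suffices H : ∀ ℓ ≤ L, (∃ p : ℂ[X], p.natDegree ≤ m ∧
      ∀ y, iterW ξ A B κ c ℓ u₀ y = planeWave κ (c ℓ) y * p.eval (y : ℂ)) ∧
      ∀ x ∈ Icc (A ℓ) (B ℓ), ‖u₀ x - iterW ξ A B κ c ℓ u₀ x‖ ≤ ((1 + δ) ^ ℓ - 1) * M₀ from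
    fun ℓ hℓ => (H ℓ hℓ).2
  intro ℓ
  induction ℓ with
  | zero => exact fun _ => ⟨⟨π, hπ, fun _ => rfl⟩, fun x _ => by simp [iterW]⟩
  | succ i ih =>
    intro hi
    obtain ⟨⟨p, hp, hiter⟩, herr⟩ := ih (by omega)
    have hJ : Icc (A (i + 1)) (B (i + 1)) ⊆ Icc (A i) (B i) := by
      simpa using hnest (i + 1) (by omega) hi
    have hp_le : supNormOn (fun y : ℝ => p.eval (y : ℂ)) (Icc (A i) (B i)) ≤ (1 + δ) ^ i * M₀ :=
      supNormOn_le (mul_nonneg (pow_nonneg (by linarith) i) (supNormOn_nonneg _ _))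
        fun y hy => by
          have hu := norm_le_supNormOn hu₀ (Icc_subset_Icc_zero hnest i (by omega) hy)
          have := (norm_le_insert (u₀ y) _).trans (add_le_add hu (herr y hy))
          rw [hiter, norm_mul, norm_planeWave, one_mul] at this
          linarith
    have hfun : iterW ξ A B κ c i u₀ = fun y => planeWave κ (c i) y * p.eval (y : ℂ) :=
      funext hiter
    obtain ⟨p', hp', hiter'⟩ :=
      exists_wInterp_eq (κ := κ) (c := c (i + 1)) hinj (hab (i + 1) hi) (iterW ξ A B κ c i u₀)
    refine ⟨⟨p', hp', hiter'⟩, fun x hx => ?_⟩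
    have hstep' := hstep i (by omega) p hp x hx
    rw [← hiter x, ← hfun] at hstep'
    calc ‖u₀ x - iterW ξ A B κ c (i + 1) u₀ x‖
        ≤ ‖u₀ x - iterW ξ A B κ c i u₀ x‖ + ‖iterW ξ A B κ c i u₀ x -
            wInterp ξ (A (i + 1)) (B (i + 1)) κ (c (i + 1)) (iterW ξ A B κ c i u₀) x‖ :=
          norm_sub_le_norm_sub_add_norm_sub _ _ _
      _ ≤ ((1 + δ) ^ i - 1) * M₀ + δ * ((1 + δ) ^ i * M₀) := by
          gcongr
          · exact herr x (hJ hx)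
          · exact hstep'.trans (mul_le_mul_of_nonneg_left hp_le hδ)
      _ = ((1 + δ) ^ (i + 1) - 1) * M₀ := by ring

lemma supNormOn_sub_iterW_le {π : ℂ[X]} (hπ : π.natDegree ≤ m) :
    supNormOn (fun x => planeWave κ (c 0) x * π.eval (x : ℂ) -
        iterW ξ A B κ c L (fun y => planeWave κ (c 0) y * π.eval (y : ℂ)) x) (Icc (A L) (B L)) ≤
      ((1 + δ) ^ L - 1) *
        supNormOn (fun y => planeWave κ (c 0) y * π.eval (y : ℂ)) (Icc (A 0) (B 0)) :=
  supNormOn_le (mul_nonneg (sub_nonneg.mpr (one_le_pow₀ (by linarith))) (supNormOn_nonneg _ _))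
    (norm_sub_iterW_le hinj hab hnest hδ hstep hπ L le_rfl)

lemma supNormOn_iterW_wInterp_le (hξ : ∀ ν, ξ ν ∈ Icc (-1 : ℝ) 1) {f : ℝ → ℂ}
    (hf : ContinuousOn f (Icc (A 0) (B 0))) :
    supNormOn (iterW ξ A B κ c L (wInterp ξ (A 0) (B 0) κ (c 0) f)) (Icc (A L) (B L)) ≤
      lebesgueConst ξ * (1 + ((1 + δ) ^ L - 1)) * supNormOn f (Icc (A 0) (B 0)) := by
  obtain ⟨p₀, hp₀, hwI⟩ := exists_wInterp_eq (κ := κ) (c := c 0) hinj (hab 0 L.zero_le) f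
  have hM₀ := supNormOn_wInterp_le (κ := κ) (c := c 0) hξ (hab 0 L.zero_le) hf
  rw [funext hwI] at hM₀ ⊢
  have hΛ := lebesgueConst_nonneg hξ
  have hpow : 1 ≤ (1 + δ) ^ L := one_le_pow₀ (by linarith)
  refine supNormOn_le (mul_nonneg (mul_nonneg hΛ (by linarith)) (supNormOn_nonneg _ _))
    fun x hx => ?_
  have hu₀ := norm_le_supNormOn (f := fun y => planeWave κ (c 0) y * p₀.eval (y : ℂ))
    ((continuous_planeWave κ (c 0)).mul (by fun_prop)).continuousOn
    (Icc_subset_Icc_zero hnest L le_rfl hx)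
  calc _ ≤ _ := norm_le_insert _ _
    _ ≤ _ := add_le_add hu₀ (norm_sub_iterW_le hinj hab hnest hδ hstep hp₀ L le_rfl x hx)
    _ = (1 + ((1 + δ) ^ L - 1)) *
          supNormOn (fun y => planeWave κ (c 0) y * p₀.eval (y : ℂ)) (Icc (A 0) (B 0)) := by ring
    _ ≤ _ := by
      rw [mul_comm (lebesgueConst _), mul_assoc]
      exact mul_le_mul_of_nonneg_left hM₀ (by linarith)

end Iteration

theorem stmt16_general (qbar q γ : ℝ) (hqbar : 0 < qbar) (hq1 : qbar < q) :
    ∃ m₀ : ℕ, 0 < m₀ ∧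
      ∀ (ξ : (m : ℕ) → Fin (m + 1) → ℝ),
        (∀ m ν, ξ m ν ∈ Set.Icc (-1 : ℝ) 1) →
        (∀ m, Function.Injective (ξ m)) →
        ∀ (L : ℕ) (A B : ℕ → ℝ), (∀ ℓ ≤ L, A ℓ < B ℓ) →
          (∀ ℓ, 1 ≤ ℓ → ℓ ≤ L →
            Set.Icc (A ℓ) (B ℓ) ⊆ Set.Icc (A (ℓ - 1)) (B (ℓ - 1))) →
          (∀ ℓ, 1 ≤ ℓ → ℓ ≤ L → (B ℓ - A ℓ) / (B (ℓ - 1) - A (ℓ - 1)) ≤ qbar) →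
          ∀ (κ : ℝ) (c : ℕ → ℝ),
            (∀ ℓ, 1 ≤ ℓ → ℓ ≤ L →
              |κ * ((B (ℓ - 1) - A (ℓ - 1)) / 2) * (c (ℓ - 1) - c ℓ)| ≤ γ) →
            ∀ m : ℕ, m₀ ≤ m →
              (∀ π : Polynomial ℂ, π.natDegree ≤ m →
                supNormOn (fun x =>
                    Complex.exp (Complex.I * (κ : ℂ) * (c 0 : ℂ) * (x : ℂ)) * π.eval (x : ℂ) -
                    iterW (ξ m) A B κ c L
                      (fun y => Complex.exp (Complex.I * (κ : ℂ) * (c 0 : ℂ) * (y : ℂ)) *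
                        π.eval (y : ℂ)) x)
                  (Set.Icc (A L) (B L))
                ≤ ((1 + (1 + lebesgueConst (ξ m)) * q ^ m) ^ L - 1) *
                  supNormOn (fun x =>
                      Complex.exp (Complex.I * (κ : ℂ) * (c 0 : ℂ) * (x : ℂ)) * π.eval (x : ℂ))
                    (Set.Icc (A 0) (B 0))) ∧
              (∀ f : ℝ → ℂ, ContinuousOn f (Set.Icc (A 0) (B 0)) →
                supNormOn (iterW (ξ m) A B κ c L (wInterp (ξ m) (A 0) (B 0) κ (c 0) f))
                    (Set.Icc (A L) (B L))
                ≤ lebesgueConst (ξ m) * (1 + ((1 + (1 + lebesgueConst (ξ m)) * q ^ m) ^ L - 1)) *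
                  supNormOn f (Set.Icc (A 0) (B 0))) := by
  obtain ⟨R, hR, m₀, hm₀, hrate⟩ := exists_radius_rate_le_pow hqbar.le hq1 γ
  refine ⟨m₀, hm₀, fun ξ hξ hinj L A B hab hnest hratio κ c hγc m hm => ?_⟩
  have hΛ := lebesgueConst_nonneg (hξ m)
  have hδ : 0 ≤ (1 + lebesgueConst (ξ m)) * q ^ m :=
    mul_nonneg (by linarith) (pow_nonneg (by linarith) m)
  have hstep := fun i (hi : i < L) (p : Polynomial ℂ) (hp : p.natDegree ≤ m) x
      (hx : x ∈ Icc (A (i + 1)) (B (i + 1))) =>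
    (norm_sub_wInterp_le (κ := κ) (hξ m) (hinj m) (hab (i + 1) hi)
      (by simpa using hnest (i + 1) (by omega) hi) (by simpa using hratio (i + 1) (by omega) hi)
      (by simpa using hγc (i + 1) (by omega) hi) hR hp hx).trans
    (mul_le_mul_of_nonneg_right (mul_le_mul_of_nonneg_left (hrate m hm) (by linarith))
      (supNormOn_nonneg _ _))
  exact ⟨fun π hπ => supNormOn_sub_iterW_le (hinj m) hab hnest hδ hstep hπ,
    fun f hf => supNormOn_iterW_wInterp_le (hinj m) hab hnest hδ hstep (hξ m) hf⟩

/-- stability of reinterpolation: for `q ∈ (q̄,1)` there is `m₀`,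
depending only on `γ, q̄, q`, such that for all `m ≥ m₀`, with
`ε_{m,L} = (1+(1+Λ_m)q^m)^L − 1`:
(a) `‖(I − 𝕀_L∘⋯∘𝕀₁)[exp(iκc₀·)π]‖_{∞,J_L} ≤ ε_{m,L}‖exp(iκc₀·)π‖_{∞,J₀}` for `π ∈ Π_m`;
(b) `‖𝕀_L∘⋯∘𝕀₀‖_{C(J₀)→C(J_L)} ≤ Λ_m(1+ε_{m,L})`. -/
theorem stmt16 (qbar q γ : ℝ) (hqbar : 0 < qbar) (hq1 : qbar < q) (hq2 : q < 1)
    (hγ : 0 ≤ γ) :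
    ∃ m₀ : ℕ, 0 < m₀ ∧
      ∀ (ξ : (m : ℕ) → Fin (m + 1) → ℝ),
        (∀ m ν, ξ m ν ∈ Set.Icc (-1 : ℝ) 1) →
        (∀ m, Function.Injective (ξ m)) →
        ∀ (L : ℕ) (A B : ℕ → ℝ), (∀ ℓ ≤ L, A ℓ < B ℓ) →
          (∀ ℓ, 1 ≤ ℓ → ℓ ≤ L →
            Set.Icc (A ℓ) (B ℓ) ⊆ Set.Icc (A (ℓ - 1)) (B (ℓ - 1))) →
          (∀ ℓ, 1 ≤ ℓ → ℓ ≤ L → (B ℓ - A ℓ) / (B (ℓ - 1) - A (ℓ - 1)) ≤ qbar) →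
          ∀ (κ : ℝ) (c : ℕ → ℝ),
            (∀ ℓ, 1 ≤ ℓ → ℓ ≤ L →
              |κ * ((B (ℓ - 1) - A (ℓ - 1)) / 2) * (c (ℓ - 1) - c ℓ)| ≤ γ) →
            ∀ m : ℕ, m₀ ≤ m →
              (∀ π : Polynomial ℂ, π.natDegree ≤ m →
                supNormOn (fun x =>
                    Complex.exp (Complex.I * (κ : ℂ) * (c 0 : ℂ) * (x : ℂ)) * π.eval (x : ℂ) -
                    iterW (ξ m) A B κ c L
                      (fun y => Complex.exp (Complex.I * (κ : ℂ) * (c 0 : ℂ) * (y : ℂ)) *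
                        π.eval (y : ℂ)) x)
                  (Set.Icc (A L) (B L))
                ≤ ((1 + (1 + lebesgueConst (ξ m)) * q ^ m) ^ L - 1) *
                  supNormOn (fun x =>
                      Complex.exp (Complex.I * (κ : ℂ) * (c 0 : ℂ) * (x : ℂ)) * π.eval (x : ℂ))
                    (Set.Icc (A 0) (B 0))) ∧
              (∀ f : ℝ → ℂ, ContinuousOn f (Set.Icc (A 0) (B 0)) →
                supNormOn (iterW (ξ m) A B κ c L (wInterp (ξ m) (A 0) (B 0) κ (c 0) f))
                    (Set.Icc (A L) (B L))
                ≤ lebesgueConst (ξ m) * (1 + ((1 + (1 + lebesgueConst (ξ m)) * q ^ m) ^ L - 1)) *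
                  supNormOn f (Set.Icc (A 0) (B 0))) :=
  stmt16_general qbar q γ hqbar hq1
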